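/- arXiv:1701.05729 — 3 statements merged into one kernel-verified Lean document; each statement's English description precedes it below -/
import Mathlib

section
/- Let n₀ ∈ ℕ and let f : {n ∈ ℕ : n ≥ n₀} → K be an M-power series function. Then the function F : {n ∈ ℕ : n ≥ n₀} → K defined by F(n) = Σ_{n₀ ≤ k ≤ n} f(k) is also an M-power series function. -/
open Filter

noncomputable section

variable {K : Type*}

/-- Evaluation of the power series with coefficients `c` at the point `x`, as a `tsum`. -/
def evalPS [NormedField K] (c : ℕ → K) (x : K) : K := ∑' m, c m * x ^ m

/-- The power series with coefficients `c` converges on the closed disc of radius `r`,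
i.e. `‖c m‖ * r ^ m → 0`. -/
def PSConvOn [NormedField K] (c : ℕ → K) (r : ℝ) : Prop :=
  Filter.Tendsto (fun m => ‖c m‖ * r ^ m) Filter.atTop (nhds 0)

/-- `f`, regarded as a function on `{n : ℕ // n₀ ≤ n}`, is an `M`-power series function:
for every `i` with `0 < i ≤ pM` there is a power series `cᵢ` converging on a closed disc of
radius `rᵢ > |p| = 1/p` such that `f a = cᵢ (a - i)` for all `a ≥ n₀` with `pM ∣ a - i`. -/
def IsMPSF (p M n₀ : ℕ) [NormedField K] (f : ℕ → K) : Prop :=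
  ∀ i : ℕ, 0 < i → i ≤ p * M →
    ∃ (r : ℝ) (c : ℕ → K), (p : ℝ)⁻¹ < r ∧ PSConvOn c r ∧
      ∀ a : ℕ, n₀ ≤ a → ((p : ℤ) * M) ∣ ((a : ℤ) - (i : ℤ)) →
        f a = evalPS c ((a : K) - (i : K))

/-!
Along a progression `b + pM·ℕ` with `n₀ ≤ b`, an `M`-power series function is a power series in
`pM·t` converging on a disc of radius `r > 1/p ≥ ‖pM‖`: recentering a power series at a point of
its disc keeps the radius in a nonarchimedean field, so this is a reformulation of `IsMPSF`.
For `F(n) = ∑_{n₀ ≤ k ≤ n} f k` one has `F(b + pM·t) = F(b) + ∑_{s<t} g s` with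
`g s = ∑_{j<pM} f (b + 1 + j + pM·s)`, so everything reduces to summing `∑_m c_m (h s)^m` over
`s < t`. Writing `s^m = ∑_j S(m,j) s(s-1)⋯(s-j+1)` and telescoping, `∑_{s<t} s^m` is a polynomial
in `t` of degree `m + 1` whose only denominators are `j + 1 ≤ m + 1`, so its coefficients have
norm at most `m + 1` when `‖1/n‖ ≤ n`, as in `ℚ_p`. After regrouping by powers of `h t`, this
polynomial loss and the factors `h^{-k}` are absorbed by shrinking the radius to some
`ρ ∈ (1/p, r)`; this is where the strict inequality `r > 1/p` is used.
-/

open Finset Polynomial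

section Faulhaber

variable {R : Type*} [CommRing R]

theorem X_pow_eq_sum_stirlingSecond_mul_descPochhammer (m : ℕ) :
    (X : R[X]) ^ m = ∑ j ∈ range (m + 1), (m.stirlingSecond j : R[X]) * descPochhammer R j := by
  induction m with
  | zero => simp
  | succ m ih =>
    have hshift : ∑ j ∈ range (m + 1), (m.stirlingSecond j * j : R[X]) * descPochhammer R j =
        ∑ j ∈ range (m + 1),
          ((j + 1) * m.stirlingSecond (j + 1) : R[X]) * descPochhammer R (j + 1) := by
      rw [sum_range_succ', sum_range_succ _ m, Nat.stirlingSecond_eq_zero_of_lt m.lt_succ_self]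
      simp only [Nat.cast_zero, mul_zero, zero_mul, add_zero]
      exact sum_congr rfl fun j _ => by push_cast; ring
    calc (X : R[X]) ^ (m + 1)
        = ∑ j ∈ range (m + 1), (m.stirlingSecond j : R[X]) * descPochhammer R (j + 1) +
            ∑ j ∈ range (m + 1), (m.stirlingSecond j * j : R[X]) * descPochhammer R j := by
          rw [pow_succ, ih, sum_mul, ← sum_add_distrib]
          exact sum_congr rfl fun j _ => by rw [descPochhammer_succ_right]; ring
      _ = _ := by
          rw [hshift, ← sum_add_distrib, sum_range_succ' _ (m + 1)]
          simp only [Nat.stirlingSecond_succ_zero, Nat.cast_zero, zero_mul, add_zero,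
            Nat.stirlingSecond_succ_succ]
          exact sum_congr rfl fun j _ => by push_cast; ring

theorem descPochhammer_eval_add_one_sub_eval (j : ℕ) (x : R) :
    (descPochhammer R (j + 1)).eval (x + 1) - (descPochhammer R (j + 1)).eval x =
      (j + 1) * (descPochhammer R j).eval x := by
  nth_rw 1 [descPochhammer_succ_left]
  rw [descPochhammer_succ_eval]
  simp only [eval_mul, eval_X, eval_comp, eval_sub, eval_one, add_sub_cancel_right]
  ring

theorem succ_mul_sum_range_descPochhammer_eval (j t : ℕ) :
    (j + 1) * ∑ s ∈ range t, (descPochhammer R j).eval (s : R) =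
      (descPochhammer R (j + 1)).eval (t : R) := by
  simp_rw [mul_sum, ← descPochhammer_eval_add_one_sub_eval, ← Nat.cast_succ]
  rw [sum_range_sub (fun s : ℕ => (descPochhammer R (j + 1)).eval (s : R))]
  simp

end Faulhaber

theorem tendsto_uncurry_cofinite_zero {E : Type*} [SeminormedAddCommGroup E] {G : ℕ → ℕ → E}
    {b : ℕ → ℝ} {N : ℕ} (hb : Tendsto b atTop (nhds 0)) (hG : ∀ m k, ‖G m k‖ ≤ b m)
    (hGN : ∀ m k, m + N < k → G m k = 0) :
    Tendsto (Function.uncurry G) cofinite (nhds 0) := by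
  rw [Metric.tendsto_nhds]
  intro ε hε
  obtain ⟨m₀, hm₀⟩ := eventually_atTop.1 ((Metric.tendsto_nhds.1 hb) ε hε)
  refine (range m₀ ×ˢ range (m₀ + N + 1) : Finset (ℕ × ℕ)).finite_toSet.subset ?_
  rintro ⟨m, k⟩ hmk
  replace hmk : ε ≤ ‖G m k‖ := by simpa using hmk
  have hm : m < m₀ := by
    by_contra! h
    have := hm₀ m h
    rw [Real.dist_0_eq_abs] at this
    linarith [le_abs_self (b m), hG m k]
  have hk : k ≤ m + N := by
    by_contra! h
    rw [hGN m k h, norm_zero] at hmk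
    linarith
  simp only [coe_product, coe_range, Set.mem_prod, Set.mem_Iio]
  omega

section PowerSeries

variable [NormedField K]

theorem PSConvOn.mono {c : ℕ → K} {r r' : ℝ} (hc : PSConvOn c r) (hr' : 0 ≤ r') (h : r' ≤ r) :
    PSConvOn c r' :=
  squeeze_zero (fun m => by positivity)
    (fun m => mul_le_mul_of_nonneg_left (pow_le_pow_left₀ hr' h m) (norm_nonneg _)) hc

theorem PSConvOn.add {c c' : ℕ → K} {r : ℝ} (hc : PSConvOn c r) (hc' : PSConvOn c' r)
    (hr : 0 ≤ r) : PSConvOn (c + c') r := by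
  have := Tendsto.add hc hc'
  rw [add_zero] at this
  refine squeeze_zero (fun m => by positivity) (fun m => ?_) this
  rw [← add_mul]
  exact mul_le_mul_of_nonneg_right (norm_add_le _ _) (pow_nonneg hr m)

theorem PSConvOn.tendsto_succ_mul {c : ℕ → K} {r ρ : ℝ} (hc : PSConvOn c r) (hρ : 0 ≤ ρ)
    (hρr : ρ < r) : Tendsto (fun m : ℕ => ((m : ℝ) + 1) * (‖c m‖ * ρ ^ m)) atTop (nhds 0) := by
  have hr : 0 < r := hρ.trans_lt hρr
  have hq0 : 0 ≤ ρ / r := div_nonneg hρ hr.le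
  have hq1 : ρ / r < 1 := (div_lt_one hr).2 hρr
  have hgeom : Tendsto (fun m : ℕ => ((m : ℝ) + 1) * (ρ / r) ^ m) atTop (nhds 0) := by
    simpa [add_mul] using (tendsto_self_mul_const_pow_of_lt_one hq0 hq1).add
      (tendsto_pow_atTop_nhds_zero_of_lt_one hq0 hq1)
  have := hc.mul hgeom
  rw [mul_zero] at this
  refine this.congr fun m => ?_
  rw [div_pow]
  field_simp

variable [IsUltrametricDist K]

theorem norm_mul_natCast_le (x : K) (n : ℕ) : ‖x * n‖ ≤ ‖x‖ := by
  rw [norm_mul]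
  exact mul_le_of_le_one_right (norm_nonneg x) (IsUltrametricDist.norm_natCast_le_one K n)

theorem norm_intCast_le_of_dvd {n z : ℤ} (h : n ∣ z) : ‖(z : K)‖ ≤ ‖(n : K)‖ := by
  obtain ⟨w, rfl⟩ := h
  rw [Int.cast_mul, norm_mul]
  exact mul_le_of_le_one_right (norm_nonneg _) (IsUltrametricDist.norm_intCast_le_one K w)

theorem norm_descPochhammer_coeff_le_one (n k : ℕ) : ‖(descPochhammer K n).coeff k‖ ≤ 1 := by
  rw [← descPochhammer_map (Int.castRingHom K), coeff_map, eq_intCast]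
  exact IsUltrametricDist.norm_intCast_le_one K _

theorem exists_eval_eq_sum_range_pow (hK : ∀ n : ℕ, (n : ℝ)⁻¹ ≤ ‖(n : K)‖) (m : ℕ) :
    ∃ P : K[X], P.natDegree ≤ m + 1 ∧ (∀ k, ‖P.coeff k‖ ≤ m + 1) ∧
      ∀ t : ℕ, P.eval (t : K) = ∑ s ∈ range t, (s : K) ^ m := by
  have hinv (j : ℕ) : ‖((j : K) + 1)⁻¹‖ ≤ j + 1 := by
    have := hK (j + 1)
    push_cast at this
    rw [norm_inv]
    exact inv_le_of_inv_le₀ (by positivity) this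
  have hne (j : ℕ) : (j : K) + 1 ≠ 0 := by
    have := hK (j + 1)
    push_cast at this
    exact norm_pos_iff.mp (lt_of_lt_of_le (by positivity) this)
  refine ⟨∑ j ∈ range (m + 1),
    C ((m.stirlingSecond j : K) * ((j : K) + 1)⁻¹) * descPochhammer K (j + 1), ?_, ?_, ?_⟩
  · refine natDegree_sum_le_of_forall_le _ _ fun j hj => (natDegree_C_mul_le _ _).trans ?_
    rw [descPochhammer_natDegree]
    exact Nat.succ_le_succ (Nat.lt_succ_iff.mp (mem_range.mp hj))
  · intro k
    rw [finsetSum_coeff]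
    refine IsUltrametricDist.norm_sum_le_of_forall_le_of_nonneg (by positivity) fun j hj => ?_
    have hj : (j : ℝ) ≤ m := by exact_mod_cast Nat.lt_succ_iff.mp (mem_range.mp hj)
    rw [coeff_C_mul, norm_mul, norm_mul]
    calc ‖(m.stirlingSecond j : K)‖ * ‖((j : K) + 1)⁻¹‖ * ‖(descPochhammer K (j + 1)).coeff k‖
        ≤ 1 * (j + 1) * 1 := by
          gcongr
          · exact IsUltrametricDist.norm_natCast_le_one K _
          · exact hinv j
          · exact norm_descPochhammer_coeff_le_one _ _
      _ ≤ m + 1 := by linarith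
  · intro t
    have hpow (s : ℕ) :=
      congrArg (eval (s : K)) (X_pow_eq_sum_stirlingSecond_mul_descPochhammer (R := K) m)
    simp only [eval_pow, eval_X, eval_finsetSum, eval_mul, eval_natCast] at hpow
    simp only [eval_finsetSum, eval_mul, eval_C, hpow]
    rw [sum_comm]
    refine sum_congr rfl fun j _ => ?_
    rw [← succ_mul_sum_range_descPochhammer_eval, mul_sum, mul_sum]
    refine sum_congr rfl fun s _ => ?_
    field_simp [hne j]

section Regroup

variable {G : ℕ → ℕ → K} {b : ℕ → ℝ} {r : ℝ} {N : ℕ}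

theorem psConvOn_tsum_of_norm_mul_pow_le (hr : 0 < r) (hb : Tendsto b atTop (nhds 0))
    (hG : ∀ m k, ‖G m k‖ * r ^ k ≤ b m) (hGN : ∀ m k, m + N < k → G m k = 0) :
    PSConvOn (fun k => ∑' m, G m k) r := by
  rw [PSConvOn, Metric.tendsto_nhds]
  intro ε hε
  obtain ⟨m₀, hm₀⟩ := eventually_atTop.1 ((Metric.tendsto_nhds.1 hb) (ε / 2) (half_pos hε))
  refine eventually_atTop.2 ⟨m₀ + N, fun k hk => ?_⟩
  have hrk : 0 < r ^ k := pow_pos hr k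
  have hsum : ‖∑' m, G m k‖ ≤ ε / 2 / r ^ k := by
    refine IsUltrametricDist.norm_tsum_le_of_forall_le_of_nonneg (by positivity) fun m => ?_
    rw [le_div_iff₀ hrk]
    rcases lt_or_ge (m + N) k with h | h
    · rw [hGN m k h, norm_zero, zero_mul]
      positivity
    · have := hm₀ m (by omega)
      rw [Real.dist_0_eq_abs] at this
      linarith [le_abs_self (b m), hG m k]
  rw [Real.dist_0_eq_abs, abs_of_nonneg (by positivity)]
  calc ‖∑' m, G m k‖ * r ^ k ≤ ε / 2 := (le_div_iff₀ hrk).1 hsum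
    _ < ε := half_lt_self hε

variable [CompleteSpace K]

theorem tsum_sum_range_eq_evalPS_tsum (hb : Tendsto b atTop (nhds 0))
    (hG : ∀ m k, ‖G m k‖ * r ^ k ≤ b m) (hGN : ∀ m k, m + N < k → G m k = 0) {x : K}
    (hx : ‖x‖ ≤ r) :
    ∑' m, ∑ k ∈ range (m + N + 1), G m k * x ^ k = evalPS (fun k => ∑' m, G m k) x := by
  have hsum : Summable (Function.uncurry fun m k => G m k * x ^ k) := by
    refine NonarchimedeanAddGroup.summable_of_tendsto_cofinite_zero
      (tendsto_uncurry_cofinite_zero (N := N) hb (fun m k => ?_) fun m k h => by simp [hGN m k h])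
    rw [norm_mul, norm_pow]
    exact (mul_le_mul_of_nonneg_left (pow_le_pow_left₀ (norm_nonneg x) hx k)
      (norm_nonneg _)).trans (hG m k)
  calc ∑' m, ∑ k ∈ range (m + N + 1), G m k * x ^ k = ∑' m, ∑' k, G m k * x ^ k :=
        tsum_congr fun m => (tsum_eq_sum fun k hk => by
          rw [hGN m k (by simpa using hk), zero_mul]).symm
    _ = ∑' k, ∑' m, G m k * x ^ k := hsum.tsum_comm.symm
    _ = evalPS (fun k => ∑' m, G m k) x := tsum_congr fun k => tsum_mul_right

end Regroup

variable [CompleteSpace K]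

theorem PSConvOn.summable {c : ℕ → K} {r : ℝ} (hc : PSConvOn c r) {x : K} (hx : ‖x‖ ≤ r) :
    Summable fun m => c m * x ^ m := by
  refine NonarchimedeanAddGroup.summable_of_tendsto_cofinite_zero ?_
  rw [Nat.cofinite_eq_atTop, tendsto_zero_iff_norm_tendsto_zero]
  refine squeeze_zero (fun m => norm_nonneg _) (fun m => ?_) hc
  rw [norm_mul, norm_pow]
  exact mul_le_mul_of_nonneg_left (pow_le_pow_left₀ (norm_nonneg x) hx m) (norm_nonneg _)

theorem evalPS_add {c c' : ℕ → K} {r : ℝ} (hc : PSConvOn c r) (hc' : PSConvOn c' r) {x : K}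
    (hx : ‖x‖ ≤ r) : evalPS (c + c') x = evalPS c x + evalPS c' x := by
  simp only [evalPS, Pi.add_apply, add_mul]
  exact (hc.summable hx).tsum_add (hc'.summable hx)

theorem PSConvOn.exists_evalPS_add {c : ℕ → K} {r : ℝ} (hc : PSConvOn c r) (hr : 0 < r) {δ : K}
    (hδ : ‖δ‖ ≤ r) :
    ∃ c' : ℕ → K, PSConvOn c' r ∧ ∀ x : K, ‖x‖ ≤ r → evalPS c (x + δ) = evalPS c' x := by
  set G : ℕ → ℕ → K := fun m k => c m * (m.choose k * δ ^ (m - k))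
  have hGN : ∀ m k, m + 0 < k → G m k = 0 := fun m k h => by
    simp [G, Nat.choose_eq_zero_of_lt (show m < k by omega)]
  have hG : ∀ m k, ‖G m k‖ * r ^ k ≤ ‖c m‖ * r ^ m := by
    intro m k
    rcases le_or_gt k m with h | h
    · calc ‖G m k‖ * r ^ k = ‖c m‖ * (‖(m.choose k : K)‖ * ‖δ‖ ^ (m - k)) * r ^ k := by
            simp only [G, norm_mul, norm_pow]
        _ ≤ ‖c m‖ * (1 * r ^ (m - k)) * r ^ k := by
            gcongr
            exact IsUltrametricDist.norm_natCast_le_one K _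
        _ = ‖c m‖ * r ^ m := by rw [one_mul, mul_assoc, ← pow_add, Nat.sub_add_cancel h]
    · rw [hGN m k (by omega), norm_zero, zero_mul]
      positivity
  refine ⟨_, psConvOn_tsum_of_norm_mul_pow_le hr hc hG hGN, fun x hx => ?_⟩
  rw [← tsum_sum_range_eq_evalPS_tsum hc hG hGN hx, evalPS]
  refine tsum_congr fun m => ?_
  rw [add_pow, mul_sum, add_zero]
  exact sum_congr rfl fun k _ => by ring

theorem PSConvOn.exists_sum_range_evalPS_mul (hK : ∀ n : ℕ, (n : ℝ)⁻¹ ≤ ‖(n : K)‖)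
    {c : ℕ → K} {r ρ : ℝ} (hc : PSConvOn c r) {h : K} (hh : h ≠ 0) (hhρ : ‖h‖ ≤ ρ)
    (hρr : ρ < r) :
    ∃ d : ℕ → K, PSConvOn d ρ ∧
      ∀ t : ℕ, ∑ s ∈ range t, evalPS c (h * s) = evalPS d (h * t) := by
  choose P hPdeg hPcoeff hPeval using exists_eval_eq_sum_range_pow hK
  have hh0 : 0 < ‖h‖ := norm_pos_iff.2 hh
  have hρ : 0 < ρ := hh0.trans_le hhρ
  set G : ℕ → ℕ → K := fun m k => c m * h ^ m * (P m).coeff k * h⁻¹ ^ k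
  set b : ℕ → ℝ := fun m => ρ / ‖h‖ * (((m : ℝ) + 1) * (‖c m‖ * ρ ^ m))
  have hb : Tendsto b atTop (nhds 0) := by
    simpa using (hc.tendsto_succ_mul hρ.le hρr).const_mul (ρ / ‖h‖)
  have hGN : ∀ m k, m + 1 < k → G m k = 0 := fun m k hk => by
    simp [G, coeff_eq_zero_of_natDegree_lt ((hPdeg m).trans_lt hk)]
  have hG : ∀ m k, ‖G m k‖ * ρ ^ k ≤ b m := by
    intro m k
    rcases le_or_gt k (m + 1) with hk | hk
    · calc ‖G m k‖ * ρ ^ k = ‖(P m).coeff k‖ * (‖c m‖ * ‖h‖ ^ m * (ρ / ‖h‖) ^ k) := by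
            simp only [G, norm_mul, norm_pow, norm_inv, div_pow]
            ring
        _ ≤ (m + 1) * (‖c m‖ * ‖h‖ ^ m * (ρ / ‖h‖) ^ (m + 1)) := by
            gcongr
            · exact hPcoeff m k
            · exact (one_le_div hh0).2 hhρ
        _ = b m := by
            simp only [b, pow_succ, div_pow]
            field_simp
    · rw [hGN m k hk, norm_zero, zero_mul]
      positivity
  refine ⟨_, psConvOn_tsum_of_norm_mul_pow_le hρ hb hG hGN, fun t => ?_⟩
  rw [← tsum_sum_range_eq_evalPS_tsum hb hG hGN ((norm_mul_natCast_le h t).trans hhρ)]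
  simp only [evalPS]
  rw [← Summable.tsum_finsetSum fun s _ =>
      hc.summable ((norm_mul_natCast_le h s).trans (hhρ.trans hρr.le))]
  refine tsum_congr fun m => ?_
  calc ∑ s ∈ range t, c m * (h * s) ^ m = c m * h ^ m * (P m).eval (t : K) := by
        simp only [hPeval, mul_sum, mul_pow, mul_assoc]
    _ = ∑ k ∈ range (m + 1 + 1), G m k * (h * t) ^ k := by
        rw [eval_eq_sum_range' (n := m + 1 + 1) (by have := hPdeg m; omega), mul_sum]
        refine sum_congr rfl fun k _ => ?_
        simp only [G, mul_pow, inv_pow]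
        field_simp

end PowerSeries

section Along

variable [NormedField K]

def IsPSAlong (R : ℝ) (h : K) (φ : ℕ → K) : Prop :=
  ∃ r, R < r ∧ ∃ c : ℕ → K, PSConvOn c r ∧ ∀ t : ℕ, φ t = evalPS c (h * t)

theorem isPSAlong_const (R : ℝ) (h κ : K) : IsPSAlong R h fun _ => κ := by
  refine ⟨R + 1, by linarith, Pi.single 0 κ, ?_, fun t => ?_⟩
  · refine tendsto_const_nhds.congr' ?_
    filter_upwards [eventually_ne_atTop 0] with m hm
    simp [hm]
  · rw [evalPS, tsum_eq_single 0 fun m hm => by simp [hm]]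
    simp

variable [IsUltrametricDist K] [CompleteSpace K] {R : ℝ} {h : K}

theorem IsPSAlong.add {φ ψ : ℕ → K} (hh : ‖h‖ ≤ R) (hφ : IsPSAlong R h φ)
    (hψ : IsPSAlong R h ψ) : IsPSAlong R h (φ + ψ) := by
  obtain ⟨r, hRr, c, hc, hφc⟩ := hφ
  obtain ⟨r', hRr', c', hc', hψc'⟩ := hψ
  have hr : 0 ≤ min r r' := (norm_nonneg h).trans (hh.trans (lt_min hRr hRr').le)
  have hcr := hc.mono hr (min_le_left r r')
  have hcr' := hc'.mono hr (min_le_right r r')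
  refine ⟨min r r', lt_min hRr hRr', c + c', hcr.add hcr' hr, fun t => ?_⟩
  rw [Pi.add_apply, hφc, hψc',
    evalPS_add hcr hcr' ((norm_mul_natCast_le h t).trans (hh.trans (lt_min hRr hRr').le))]

theorem IsPSAlong.sum {ι : Type*} {s : Finset ι} {φ : ι → ℕ → K} (hh : ‖h‖ ≤ R)
    (hφ : ∀ j ∈ s, IsPSAlong R h (φ j)) : IsPSAlong R h fun t => ∑ j ∈ s, φ j t := by
  have := Finset.sum_induction φ (IsPSAlong R h) (fun _ _ => IsPSAlong.add hh)
    (isPSAlong_const R h 0) hφ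
  rwa [Finset.sum_fn] at this

theorem IsPSAlong.sum_range (hK : ∀ n : ℕ, (n : ℝ)⁻¹ ≤ ‖(n : K)‖) {φ : ℕ → K} (hh0 : h ≠ 0)
    (hh : ‖h‖ ≤ R) (hφ : IsPSAlong R h φ) : IsPSAlong R h fun t => ∑ s ∈ range t, φ s := by
  obtain ⟨r, hRr, c, hc, hφc⟩ := hφ
  obtain ⟨ρ, hRρ, hρr⟩ := exists_between hRr
  obtain ⟨d, hd, hsum⟩ := hc.exists_sum_range_evalPS_mul hK hh0 (hh.trans hRρ.le) hρr
  exact ⟨ρ, hRρ, d, hd, fun t => by simp only [hφc, hsum]⟩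

end Along

theorem exists_pos_le_dvd_sub (b : ℕ) {q : ℕ} (hq : 0 < q) :
    ∃ i, 0 < i ∧ i ≤ q ∧ (q : ℤ) ∣ (b : ℤ) - i := by
  refine ⟨(b + q - 1) % q + 1, Nat.succ_pos _, Nat.mod_lt _ hq, Nat.modEq_iff_dvd.1 ?_⟩
  have h := (Nat.mod_modEq (b + q - 1) q).add_right 1
  rw [Nat.sub_add_cancel (by omega)] at h
  exact h.trans (Nat.add_mod_right b q)

theorem sum_Icc_add_mul {M : Type*} [AddCommMonoid M] (f : ℕ → M) {n₀ b : ℕ} (hb : n₀ ≤ b)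
    (q t : ℕ) :
    ∑ k ∈ Icc n₀ (b + q * t), f k =
      ∑ k ∈ Icc n₀ b, f k + ∑ s ∈ range t, ∑ j ∈ range q, f (b + 1 + j + q * s) := by
  induction t with
  | zero => simp
  | succ t ih =>
    have hblock : ∑ k ∈ Icc n₀ (b + q * t + q), f k =
        ∑ k ∈ Icc n₀ (b + q * t), f k + ∑ j ∈ range q, f (b + q * t + 1 + j) := by
      simp only [← Ico_add_one_right_eq_Icc]
      rw [← sum_Ico_consecutive _ (by omega : n₀ ≤ b + q * t + 1) (by omega :
        b + q * t + 1 ≤ b + q * t + q + 1), sum_Ico_eq_sum_range f (b + q * t + 1),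
        show b + q * t + q + 1 - (b + q * t + 1) = q by omega]
    rw [mul_add_one, ← add_assoc, hblock, ih, sum_range_succ, add_assoc]
    congr 3
    ext j
    congr 1
    ring

section MPSF

variable [NormedField K] [IsUltrametricDist K] {p M n₀ : ℕ} {f : ℕ → K}

theorem norm_natCast_sub_natCast_le (hq : ‖(p * M : K)‖ ≤ (p : ℝ)⁻¹) {a i : ℕ}
    (h : (p * M : ℤ) ∣ (a : ℤ) - i) : ‖(a : K) - i‖ ≤ (p : ℝ)⁻¹ := by
  have := norm_intCast_le_of_dvd (K := K) h
  push_cast at this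
  exact this.trans hq

variable [CompleteSpace K]

theorem IsMPSF.isPSAlong (hq : ‖(p * M : K)‖ ≤ (p : ℝ)⁻¹) (hpM : 0 < p * M)
    (hf : IsMPSF p M n₀ f) {b : ℕ} (hb : n₀ ≤ b) :
    IsPSAlong (p : ℝ)⁻¹ (p * M : K) fun t => f (b + p * M * t) := by
  obtain ⟨i, hi, hiq, hdvd⟩ := exists_pos_le_dvd_sub b hpM
  obtain ⟨r, c, hpr, hc, hfc⟩ := hf i hi hiq
  push_cast at hdvd
  have hδ : ‖(b : K) - i‖ ≤ r := (norm_natCast_sub_natCast_le hq hdvd).trans hpr.le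
  obtain ⟨c', hc', hcc'⟩ := hc.exists_evalPS_add (lt_of_le_of_lt (by positivity) hpr) hδ
  refine ⟨r, hpr, c', hc', fun t => ?_⟩
  dsimp only
  have hx : ‖(p * M : K) * t‖ ≤ r := (norm_mul_natCast_le _ t).trans (hq.trans hpr.le)
  have hdvd' : (p * M : ℤ) ∣ ((b + p * M * t : ℕ) : ℤ) - i := by
    push_cast
    rw [add_sub_right_comm]
    exact dvd_add hdvd (dvd_mul_right _ _)
  rw [hfc _ (by omega) hdvd', ← hcc' _ hx]
  push_cast
  congr 1
  ring

theorem isMPSF_of_isPSAlong (hq : ‖(p * M : K)‖ ≤ (p : ℝ)⁻¹)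
    (hF : ∀ b, n₀ ≤ b → IsPSAlong (p : ℝ)⁻¹ (p * M : K) fun t => f (b + p * M * t)) :
    IsMPSF p M n₀ f := by
  intro i hi hiq
  have hex : ∃ a : ℕ, n₀ ≤ a ∧ (p * M : ℤ) ∣ (a : ℤ) - i :=
    ⟨n₀ * (p * M) + i, by nlinarith, ⟨n₀, by push_cast; ring⟩⟩
  obtain ⟨a₀, ⟨ha₀, hdvd₀⟩, hmin⟩ : ∃ a₀, (n₀ ≤ a₀ ∧ (p * M : ℤ) ∣ (a₀ : ℤ) - i) ∧
      ∀ a, n₀ ≤ a ∧ (p * M : ℤ) ∣ (a : ℤ) - i → a₀ ≤ a :=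
    ⟨Nat.find hex, Nat.find_spec hex, fun a ha => Nat.find_min' hex ha⟩
  obtain ⟨r, hpr, d, hd, hFd⟩ := hF _ ha₀
  have hδ : ‖-((a₀ : K) - i)‖ ≤ r := by
    rw [norm_neg]
    exact (norm_natCast_sub_natCast_le hq hdvd₀).trans hpr.le
  obtain ⟨c, hc, hdc⟩ := hd.exists_evalPS_add (lt_of_le_of_lt (by positivity) hpr) hδ
  refine ⟨r, c, hpr, hc, fun a ha hdvd => ?_⟩
  obtain ⟨t, rfl⟩ : ∃ t, a = a₀ + p * M * t := by
    have ha₀a : a₀ ≤ a := hmin a ⟨ha, hdvd⟩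
    have : ((p * M : ℕ) : ℤ) ∣ ((a - a₀ : ℕ) : ℤ) := by
      push_cast [Nat.cast_sub ha₀a]
      simpa using dvd_sub hdvd hdvd₀
    obtain ⟨t, ht⟩ := Int.natCast_dvd_natCast.1 this
    exact ⟨t, by omega⟩
  refine (hFd t).trans ?_
  rw [← hdc _ ((norm_natCast_sub_natCast_le hq hdvd).trans hpr.le)]
  push_cast
  congr 1
  ring

end MPSF

theorem Padic.inv_natCast_le_norm (p : ℕ) [Fact p.Prime] (n : ℕ) :
    (n : ℝ)⁻¹ ≤ ‖(n : ℚ_[p])‖ := by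
  rcases Nat.eq_zero_or_pos n with rfl | hn
  · simp
  rw [Padic.norm_eq_zpow_neg_valuation (by exact_mod_cast hn.ne'), Padic.valuation_natCast,
    zpow_neg, zpow_natCast]
  gcongr
  · exact pow_pos (Nat.cast_pos.2 (Fact.out : p.Prime).pos) _
  · exact_mod_cast Nat.le_of_dvd hn pow_padicValNat_dvd

theorem sum_isMPSF_general (p M : ℕ) [Fact p.Prime] (hM : 1 ≤ M)
    [NormedField K] [CompleteSpace K] [Algebra ℚ_[p] K]
    (hiso : ∀ x : ℚ_[p], ‖algebraMap ℚ_[p] K x‖ = ‖x‖)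
    (n₀ : ℕ) (f : ℕ → K) (hf : IsMPSF p M n₀ f) :
    IsMPSF p M n₀ (fun n => ∑ k ∈ Finset.Icc n₀ n, f k) := by
  have hnorm (n : ℕ) : ‖(n : K)‖ = ‖(n : ℚ_[p])‖ := by
    rw [← map_natCast (algebraMap ℚ_[p] K), hiso]
  have : IsUltrametricDist K :=
    IsUltrametricDist.isUltrametricDist_of_forall_norm_natCast_le_one fun n =>
      (hnorm n).trans_le (IsUltrametricDist.norm_natCast_le_one ℚ_[p] n)
  have hK (n : ℕ) : (n : ℝ)⁻¹ ≤ ‖(n : K)‖ := (hnorm n).symm ▸ Padic.inv_natCast_le_norm p n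
  have hpM : 0 < p * M := Nat.mul_pos (Fact.out : p.Prime).pos hM
  have hq : ‖(p * M : K)‖ ≤ (p : ℝ)⁻¹ := by
    rw [norm_mul, hnorm, Padic.norm_p]
    exact mul_le_of_le_one_right (by positivity) (IsUltrametricDist.norm_natCast_le_one K M)
  have hq0 : (p * M : K) ≠ 0 := by
    have := (inv_pos.2 (Nat.cast_pos.2 hpM)).trans_le (hK (p * M))
    exact_mod_cast norm_pos_iff.1 this
  refine isMPSF_of_isPSAlong hq fun b hb => ?_
  simp_rw [sum_Icc_add_mul f hb]
  exact (isPSAlong_const _ _ _).add hq <| IsPSAlong.sum_range hK hq0 hq <|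
    IsPSAlong.sum hq fun j _ => hf.isPSAlong hq hpM (by omega)

/-- if `f` is an `M`-power series function on `{n ≥ n₀}`, then so is
`F(n) = ∑_{n₀ ≤ k ≤ n} f k`. -/
theorem sum_isMPSF (p M : ℕ) [Fact p.Prime] (hM : 1 ≤ M) (hpM : ¬ p ∣ M)
    [NormedField K] [CompleteSpace K] [Algebra ℚ_[p] K]
    (hiso : ∀ x : ℚ_[p], ‖algebraMap ℚ_[p] K x‖ = ‖x‖)
    (ζ : K) (hζ : IsPrimitiveRoot ζ M) (hgen : Algebra.adjoin ℚ_[p] {ζ} = ⊤)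
    (n₀ : ℕ) (f : ℕ → K) (hf : IsMPSF p M n₀ f) :
    IsMPSF p M n₀ (fun n => ∑ k ∈ Finset.Icc n₀ n, f k) :=
  sum_isMPSF_general p M hM hiso n₀ f hf
end
end

section
/- Fix s ∈ ℤ and an integer i with 0 ≤ i < M. The function f : ℕ_{>0} → K defined by f(k) = ζ^{ik}·k^s if p ∤ k, and f(k) = 0 if p | k, is an M-power series function. -/
/-!
On a residue class `a ≡ j (mod pM)` the factor `ζ ^ (i a) = ζ ^ (i j)` is constant and
`p ∣ a ↔ p ∣ j`. If `p ∣ j` the function vanishes on the class. Otherwise `|j| = 1` and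
`|a - j| ≤ 1/p`, so `a ^ s = (j + x) ^ s` with `x = a - j` expands as a binomial series in `x`
(finite for `s ≥ 0`, a derivative of the geometric series for `s < 0`). The integers have
norm at most one in `K`, as they do in `ℚ_p`, so `K` is nonarchimedean and the binomial
coefficients have norm at most one; hence the series converges on every disc of radius
`r < 1`, in particular for some `r > 1/p`.
-/

open Filter

noncomputable section

variable {K : Type*}

lemma psConvOn_of_norm_le [NormedField K] {c : ℕ → K} {C r : ℝ} (hc : ∀ m, ‖c m‖ ≤ C)
    (hr0 : 0 ≤ r) (hr1 : r < 1) : PSConvOn c r := by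
  have hlim : Tendsto (fun m : ℕ => C * r ^ m) atTop (nhds 0) := by
    simpa using (tendsto_pow_atTop_nhds_zero_of_lt_one hr0 hr1).const_mul C
  exact squeeze_zero (fun m => mul_nonneg (norm_nonneg _) (pow_nonneg hr0 m))
    (fun m => mul_le_mul_of_nonneg_right (hc m) (pow_nonneg hr0 m)) hlim

lemma isMPSF_of_norm_coeff_le_one [NormedField K] {p M n₀ : ℕ} (hp : 1 < p) {f : ℕ → K}
    (hf : ∀ j, 0 < j → j ≤ p * M → ∃ c : ℕ → K, (∀ m, ‖c m‖ ≤ 1) ∧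
      ∀ a, n₀ ≤ a → j ≡ a [MOD p * M] → f a = evalPS c ((a : K) - j)) :
    IsMPSF p M n₀ f := by
  intro j hj0 hjM
  have hp' : (1 : ℝ) < p := by exact_mod_cast hp
  obtain ⟨r, hpr, hr1⟩ := exists_between (inv_lt_one_of_one_lt₀ hp')
  have hr0 : 0 ≤ r := (inv_nonneg.2 (zero_le_one.trans hp'.le)).trans hpr.le
  obtain ⟨c, hc, hfc⟩ := hf j hj0 hjM
  refine ⟨r, c, hpr, psConvOn_of_norm_le hc hr0 hr1, fun a ha hdvd => hfc a ha ?_⟩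
  exact Nat.modEq_iff_dvd.2 (by exact_mod_cast hdvd)

lemma hasSum_pow_add {R : Type*} [CommSemiring R] [TopologicalSpace R] (w x : R) (n : ℕ) :
    HasSum (fun m => w ^ (n - m) * n.choose m * x ^ m) ((w + x) ^ n) := by
  have hzero : ∀ m ∉ Finset.range (n + 1), w ^ (n - m) * n.choose m * x ^ m = 0 := fun m hm => by
    simp [Nat.choose_eq_zero_of_lt (by simpa using hm : n < m)]
  convert (hasSum_sum_of_ne_finset_zero hzero : HasSum _ _) using 1
  rw [add_comm, add_pow]
  exact Finset.sum_congr rfl fun m _ => by ring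

lemma hasSum_inv_pow_add [NormedField K] [HasSummableGeomSeries K] {w x : K} (hx : ‖x‖ < ‖w‖)
    (k : ℕ) :
    HasSum (fun m => (m + k).choose k * (-w⁻¹) ^ m / w ^ (k + 1) * x ^ m)
      ((w + x) ^ (k + 1))⁻¹ := by
  have hw : w ≠ 0 := norm_pos_iff.1 ((norm_nonneg x).trans_lt hx)
  have hxw : ‖-(x / w)‖ < 1 := by
    rwa [norm_neg, norm_div, div_lt_one (norm_pos_iff.2 hw)]
  convert (hasSum_choose_mul_geometric_of_norm_lt_one k hxw).div_const (w ^ (k + 1)) using 1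
  · ext m
    rw [show -(x / w) = -w⁻¹ * x by ring, mul_pow]
    ring
  · rw [show 1 - -(x / w) = (w + x) / w by field_simp; ring, div_pow]
    field_simp

lemma exists_hasSum_zpow_add [NormedField K] [HasSummableGeomSeries K] [IsUltrametricDist K]
    {w : K} (hw : ‖w‖ = 1) (s : ℤ) :
    ∃ c : ℕ → K, (∀ m, ‖c m‖ ≤ 1) ∧
      ∀ x : K, ‖x‖ < 1 → HasSum (fun m => c m * x ^ m) ((w + x) ^ s) := by
  have hchoose (a b : ℕ) : ‖(a.choose b : K)‖ ≤ 1 := IsUltrametricDist.norm_natCast_le_one K _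
  cases s with
  | ofNat n =>
    refine ⟨fun m => w ^ (n - m) * n.choose m, fun m => ?_, fun x _ => ?_⟩
    · simpa [hw] using hchoose n m
    · simpa using hasSum_pow_add w x n
  | negSucc k =>
    refine ⟨fun m => (m + k).choose k * (-w⁻¹) ^ m / w ^ (k + 1), fun m => ?_, fun x hx => ?_⟩
    · simpa [hw] using hchoose (m + k) k
    · simpa using hasSum_inv_pow_add (hw ▸ hx) k

section IsometricPadicEmbedding

variable {p : ℕ} [Fact p.Prime] [NormedField K] [Algebra ℚ_[p] K]

lemma norm_intCast_of_isometry (hiso : ∀ x : ℚ_[p], ‖algebraMap ℚ_[p] K x‖ = ‖x‖) (n : ℤ) :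
    ‖(n : K)‖ = ‖(n : ℚ_[p])‖ := by
  rw [← map_intCast (algebraMap ℚ_[p] K), hiso]

lemma norm_natCast_le_one_of_isometry (hiso : ∀ x : ℚ_[p], ‖algebraMap ℚ_[p] K x‖ = ‖x‖)
    (n : ℕ) : ‖(n : K)‖ ≤ 1 := by
  simpa using (norm_intCast_of_isometry hiso n).trans_le (Padic.norm_int_le_one n)

lemma norm_natCast_eq_one_of_not_dvd (hiso : ∀ x : ℚ_[p], ‖algebraMap ℚ_[p] K x‖ = ‖x‖)
    {n : ℕ} (hn : ¬ p ∣ n) : ‖(n : K)‖ = 1 := by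
  have h := norm_intCast_of_isometry hiso n
  push_cast at h
  rwa [h, Padic.norm_natCast_eq_one_iff, Nat.Prime.coprime_iff_not_dvd Fact.out]

lemma norm_natCast_sub_natCast_lt_one_of_modEq
    (hiso : ∀ x : ℚ_[p], ‖algebraMap ℚ_[p] K x‖ = ‖x‖) {a b : ℕ} (h : a ≡ b [MOD p]) :
    ‖(b : K) - a‖ < 1 := by
  have := (norm_intCast_of_isometry hiso ((b : ℤ) - a)).trans_lt
    (Padic.norm_intCast_lt_one_iff.2 (Nat.modEq_iff_dvd.1 h))
  simpa using this

end IsometricPadicEmbedding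

theorem zeta_pow_mul_zpow_isMPSF_general (p M : ℕ) [Fact p.Prime]
    [NormedField K] [CompleteSpace K] [Algebra ℚ_[p] K]
    (hiso : ∀ x : ℚ_[p], ‖algebraMap ℚ_[p] K x‖ = ‖x‖)
    (ζ : K) (hζ : IsPrimitiveRoot ζ M)
    (s : ℤ) (i : ℕ) :
    IsMPSF p M 1 (fun k => if p ∣ k then 0 else ζ ^ (i * k) * (k : K) ^ s) := by
  refine isMPSF_of_norm_coeff_le_one (Fact.out : p.Prime).one_lt fun j hj0 hjM => ?_
  by_cases hpj : p ∣ j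
  · refine ⟨0, by simp, fun a _ ha => ?_⟩
    simp [evalPS, ((ha.of_mul_right M).dvd_iff dvd_rfl).1 hpj]
  have : IsUltrametricDist K :=
    IsUltrametricDist.isUltrametricDist_of_forall_norm_natCast_le_one
      (norm_natCast_le_one_of_isometry hiso)
  obtain ⟨c, hc, hsum⟩ := exists_hasSum_zpow_add (norm_natCast_eq_one_of_not_dvd hiso hpj) s
  have hζfin : IsOfFinOrder ζ := hζ.isOfFinOrder (by rintro rfl; omega)
  refine ⟨fun m => ζ ^ (i * j) * c m, fun m => by simpa [hζfin.norm_eq_one] using hc m,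
    fun a _ ha => ?_⟩
  have hpa : ¬ p ∣ a := ((ha.of_mul_right M).dvd_iff dvd_rfl).not.1 hpj
  have hζa : ζ ^ (i * a) = ζ ^ (i * j) := by
    rw [hζfin.pow_eq_pow_iff_modEq, ← hζ.eq_orderOf]
    exact (ha.of_mul_left p).symm.mul_left i
  have hx : ‖(a : K) - j‖ < 1 := norm_natCast_sub_natCast_lt_one_of_modEq hiso (ha.of_mul_right M)
  simp only [if_neg hpa, hζa, evalPS, mul_assoc]
  rw [((hsum _ hx).mul_left _).tsum_eq, add_sub_cancel]

/-- for `s ∈ ℤ` and `0 ≤ i < M`, the function `f : ℕ_{>0} → K` given by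
`f k = ζ^(i k) k^s` if `p ∤ k` and `f k = 0` if `p ∣ k`, is an `M`-power series function. -/
theorem zeta_pow_mul_zpow_isMPSF (p M : ℕ) [Fact p.Prime] (hM : 1 ≤ M) (hpM : ¬ p ∣ M)
    [NormedField K] [CompleteSpace K] [Algebra ℚ_[p] K]
    (hiso : ∀ x : ℚ_[p], ‖algebraMap ℚ_[p] K x‖ = ‖x‖)
    (ζ : K) (hζ : IsPrimitiveRoot ζ M) (hgen : Algebra.adjoin ℚ_[p] {ζ} = ⊤)
    (s : ℤ) (i : ℕ) (hi : i < M) :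
    IsMPSF p M 1 (fun k => if p ∣ k then 0 else ζ ^ (i * k) * (k : K) ^ s) :=
  zeta_pow_mul_zpow_isMPSF_general p M hiso ζ hζ s i

end
end

section
/- For any two pairs of tuples (s,i) and (t,j) (with entries as in the definition of σ_p), the pointwise product σ_p(s;i)·σ_p(t;j) : ℕ → K is a finite linear combination, with non-negative integer coefficients, of functions σ_p(u;v). Consequently, the ℤ-span of the functions {σ_p(u;v)} inside the K-algebra of functions ℕ → K is closed under pointwise multiplication. -/
open Filter

noncomputable section

variable {K : Type*}

open scoped Classical in
/-- The cyclotomic `p`-adic iterated sum series `σ(s;i;m)(n)`: the sum of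
`ζ^(i₁n₁+⋯+iₖnₖ)/(n₁^{s₁}⋯nₖ^{sₖ})` over all tuples `0 < n₁ < ⋯ < nₖ < n`
with `p ∣ nⱼ - mⱼ` for every `j`. -/
def cycSum (p : ℕ) [Field K] (ζ : K) {k : ℕ} (s i m : Fin k → ℕ) (n : ℕ) : K :=
  ∑ t ∈ (Fintype.piFinset fun _ : Fin k => Finset.Ioo 0 n).filter
      (fun t : Fin k → ℕ => StrictMono t ∧ ∀ j, (p : ℤ) ∣ ((t j : ℤ) - (m j : ℤ))),
    ∏ j, ζ ^ (i j * t j) / (t j : K) ^ (s j)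

/-- `σ_p(s;i) = σ(s;i;0)`. -/
def sigmaP (p : ℕ) [Field K] (ζ : K) {k : ℕ} (s i : Fin k → ℕ) : ℕ → K :=
  cycSum p ζ s i fun _ => 0

/-- The index set of all pairs of tuples `(s, i)` with `s` a tuple of naturals and
`i` a tuple of residues mod `M`, of a common length `k ≥ 0`. -/
def SIdx (M : ℕ) : Type := Σ k : ℕ, (Fin k → ℕ) × (Fin k → Fin M)

/-- The function `σ_p(s;i)` attached to an index `u = (s, i)`. -/
def sigmaPIdx (p M : ℕ) [Field K] (ζ : K) (u : SIdx M) : ℕ → K :=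
  sigmaP p ζ u.2.1 fun j => ((u.2.2 j : ℕ))

/-- `t ≤ s` for tuples: there is a strictly increasing reindexing `j` with `tₐ ≤ s_{j(a)}`. -/
def TupleLE {l k : ℕ} (t : Fin l → ℕ) (s : Fin k → ℕ) : Prop :=
  ∃ j : Fin l → Fin k, StrictMono j ∧ ∀ a, t a ≤ s (j a)

/-!
Peeling off the largest summation index writes `σ_p(s⊲d; i⊲e)(n)` as the nested sum
`∑_{0<a<n, p∣a} ζ^{ea}/a^d · σ_p(s;i)(a)`. A product of two nested sums splits, according to
whether the outer indices satisfy `a < b`, `b < a` or `a = b`, into three nested sums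
(the quasi-shuffle relation), the diagonal one carrying the weight `ζ^{(e+e')a}/a^{d+d'}`.
Induction on the total depth therefore puts `σ_p(s;i) · σ_p(t;j)` in the additive monoid
generated by the `σ_p(u;v)`, exponents of `ζ` being reduced mod `M`.
-/

section NestedSum

variable {R : Type*} [CommSemiring R] (q : ℕ → Prop) [DecidablePred q]

def nestedSum (x F : ℕ → R) (n : ℕ) : R :=
  ∑ a ∈ (Finset.range n).filter q, x a * F a

variable {q}

lemma nestedSum_succ (x F : ℕ → R) (n : ℕ) :
    nestedSum q x F (n + 1) = nestedSum q x F n + if q n then x n * F n else 0 := by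
  simp only [nestedSum, Finset.sum_filter, Finset.sum_range_succ]

lemma nestedSum_zero_right (x : ℕ → R) : nestedSum q x 0 = 0 := by
  funext n
  simp [nestedSum]

lemma nestedSum_add_right (x F G : ℕ → R) :
    nestedSum q x (F + G) = nestedSum q x F + nestedSum q x G := by
  funext n
  simp only [nestedSum, Pi.add_apply, mul_add, Finset.sum_add_distrib]

theorem nestedSum_mul_nestedSum (x y F G : ℕ → R) :
    nestedSum q x F * nestedSum q y G =
      nestedSum q x (F * nestedSum q y G) + nestedSum q y (nestedSum q x F * G) +
        nestedSum q (x * y) (F * G) := by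
  funext n
  induction n with
  | zero => simp [nestedSum]
  | succ n ih =>
    simp only [Pi.mul_apply, Pi.add_apply, nestedSum_succ] at ih ⊢
    split_ifs
    · rw [add_mul, mul_add, mul_add, ih]
      ring
    · simpa using ih

end NestedSum

lemma Fin.strictMono_snoc_iff {α : Type*} [Preorder α] {n : ℕ} {f : Fin n → α} {x : α} :
    StrictMono (Fin.snoc f x : Fin (n + 1) → α) ↔ StrictMono f ∧ ∀ j, f j < x := by
  constructor
  · intro h
    refine ⟨fun a b hab => ?_, fun j => ?_⟩
    · simpa using h (Fin.castSucc_lt_castSucc_iff.2 hab)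
    · simpa using h (Fin.castSucc_lt_last j)
  · rintro ⟨hf, hx⟩ a b hab
    induction b using Fin.lastCases with
    | last =>
      induction a using Fin.lastCases with
      | last => exact absurd hab (lt_irrefl _)
      | cast a => simpa using hx a
    | cast b =>
      induction a using Fin.lastCases with
      | last => exact absurd hab (not_lt.2 (Fin.le_last _))
      | cast a => simpa using hf (Fin.castSucc_lt_castSucc_iff.1 hab)

open scoped Pointwise in
theorem Submodule.mul_mem_span_of_mul_mem {R A : Type*} [CommSemiring R] [Semiring A]
    [Algebra R A] {S : Set A} (hS : ∀ a ∈ S, ∀ b ∈ S, a * b ∈ span R S) {x y : A}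
    (hx : x ∈ span R S) (hy : y ∈ span R S) : x * y ∈ span R S := by
  have hxy := mul_mem_mul hx hy
  rw [span_mul_span] at hxy
  exact span_le.2 (Set.mul_subset_iff.2 hS) hxy

def cycWeight [Field K] (ζ : K) (d e a : ℕ) : K := ζ ^ (e * a) / (a : K) ^ d

lemma cycWeight_mul [Field K] (ζ : K) (d e d' e' : ℕ) :
    cycWeight ζ d e * cycWeight ζ d' e' = cycWeight ζ (d + d') (e + e') := by
  funext a
  simp only [Pi.mul_apply, cycWeight, add_mul, pow_add]
  ring

lemma cycWeight_mod [Field K] {M : ℕ} {ζ : K} (hζ : ζ ^ M = 1) (d e : ℕ) :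
    cycWeight ζ d e = cycWeight ζ d (e % M) := by
  funext a
  rw [cycWeight, cycWeight, pow_mul, pow_mul, ← pow_eq_pow_mod e hζ]

lemma sigmaP_of_length_zero [Field K] (p : ℕ) (ζ : K) (s i : Fin 0 → ℕ) :
    sigmaP p ζ s i = 1 := by
  funext n
  simp [sigmaP, cycSum, Subsingleton.strictMono]

lemma sigmaP_snoc [Field K] (p : ℕ) (ζ : K) {k : ℕ} (s i : Fin k → ℕ) (d e : ℕ) :
    sigmaP p ζ (Fin.snoc s d) (Fin.snoc i e) =
      nestedSum (fun a => 0 < a ∧ p ∣ a) (cycWeight ζ d e) (sigmaP p ζ s i) := by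
  funext n
  simp only [sigmaP, cycSum, nestedSum, Finset.mul_sum]
  rw [Finset.sum_sigma']
  symm
  refine Finset.sum_nbij' (fun x => Fin.snoc x.2 x.1) (fun t => ⟨t (Fin.last k), Fin.init t⟩)
    (fun x _ => ?_) (Fin.snocCases fun t a _ => ?_) (fun x _ => by simp)
    (fun t _ => Fin.snoc_init_self t) (fun x _ => ?_)
  all_goals simp_all only [Finset.mem_sigma, Finset.mem_filter, Finset.mem_range,
    Fintype.mem_piFinset, Finset.mem_Ioo, Fin.forall_fin_succ', Fin.snoc_castSucc, Fin.snoc_last,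
    Fin.strictMono_snoc_iff, Fin.init_snoc, Int.natCast_dvd_natCast, CharP.cast_eq_zero,
    sub_zero, Fin.prod_univ_castSucc, cycWeight]
  all_goals grind

def SIdx.snoc {M : ℕ} (u : SIdx M) (d : ℕ) (e : Fin M) : SIdx M :=
  ⟨u.1 + 1, (Fin.snoc u.2.1 d, Fin.snoc u.2.2 e)⟩

def sigmaPCone (p M : ℕ) [Field K] (ζ : K) : AddSubmonoid (ℕ → K) :=
  AddSubmonoid.closure (Set.range (sigmaPIdx p M ζ))

section Cone

variable [Field K] {p M : ℕ} {ζ : K}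

lemma sigmaPIdx_snoc (u : SIdx M) (d : ℕ) (e : Fin M) :
    sigmaPIdx p M ζ (u.snoc d e) =
      nestedSum (fun a => 0 < a ∧ p ∣ a) (cycWeight ζ d e) (sigmaPIdx p M ζ u) := by
  change sigmaP p ζ (Fin.snoc u.2.1 d) (Fin.val ∘ Fin.snoc u.2.2 e) = _
  rw [Fin.comp_snoc, sigmaP_snoc]
  rfl

lemma nestedSum_mem_sigmaPCone (hM : 0 < M) (hζ : ζ ^ M = 1) {F : ℕ → K}
    (hF : F ∈ sigmaPCone p M ζ) (d e : ℕ) :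
    nestedSum (fun a => 0 < a ∧ p ∣ a) (cycWeight ζ d e) F ∈ sigmaPCone p M ζ := by
  induction hF using AddSubmonoid.closure_induction with
  | mem _ hF =>
    obtain ⟨u, rfl⟩ := hF
    refine AddSubmonoid.subset_closure ⟨u.snoc d ⟨e % M, Nat.mod_lt e hM⟩, ?_⟩
    rw [sigmaPIdx_snoc, cycWeight_mod hζ d e]
  | zero => simpa only [nestedSum_zero_right] using zero_mem _
  | add F G _ _ hF hG => simpa only [nestedSum_add_right] using add_mem hF hG

lemma sigmaP_mem_sigmaPCone (hM : 0 < M) (hζ : ζ ^ M = 1) {k : ℕ} (s i : Fin k → ℕ) :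
    sigmaP p ζ s i ∈ sigmaPCone p M ζ := by
  induction k with
  | zero =>
    refine AddSubmonoid.subset_closure ⟨⟨0, s, Fin.elim0⟩, ?_⟩
    exact congrArg (sigmaP p ζ s) (Subsingleton.elim _ _)
  | succ k ih =>
    induction s using Fin.snocCases with | _ s d =>
    induction i using Fin.snocCases with | _ i e =>
    rw [sigmaP_snoc]
    exact nestedSum_mem_sigmaPCone hM hζ (ih s i) d e

theorem sigmaP_mul_sigmaP_mem_sigmaPCone (hM : 0 < M) (hζ : ζ ^ M = 1) {k l : ℕ}
    (s i : Fin k → ℕ) (t j : Fin l → ℕ) :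
    sigmaP p ζ s i * sigmaP p ζ t j ∈ sigmaPCone p M ζ := by
  induction k generalizing l with
  | zero => simpa only [sigmaP_of_length_zero, one_mul] using sigmaP_mem_sigmaPCone hM hζ t j
  | succ k ihk =>
    induction l generalizing s i with
    | zero => simpa only [sigmaP_of_length_zero, mul_one] using sigmaP_mem_sigmaPCone hM hζ s i
    | succ l ihl =>
      induction s using Fin.snocCases with | _ s d =>
      induction i using Fin.snocCases with | _ i e =>
      induction t using Fin.snocCases with | _ t d' =>
      induction j using Fin.snocCases with | _ j e' =>
      have h₁ := ihk s i (Fin.snoc t d') (Fin.snoc j e')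
      have h₂ := ihl (Fin.snoc s d) (Fin.snoc i e) t j
      rw [sigmaP_snoc] at h₁ h₂
      rw [sigmaP_snoc, sigmaP_snoc, nestedSum_mul_nestedSum, cycWeight_mul]
      exact add_mem (add_mem (nestedSum_mem_sigmaPCone hM hζ h₁ d e)
        (nestedSum_mem_sigmaPCone hM hζ h₂ d' e'))
        (nestedSum_mem_sigmaPCone hM hζ (ihk s i t j) _ _)

end Cone

theorem sigmaP_mul_shuffle_general (p M : ℕ) (hM : 1 ≤ M)
    [NormedField K]
    (ζ : K) (hζ : IsPrimitiveRoot ζ M) :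
    (∀ (k l : ℕ) (s i : Fin k → ℕ) (t j : Fin l → ℕ),
      (∀ b, i b < M) → (∀ b, j b < M) →
      ∃ (T : Finset (SIdx M)) (c : SIdx M → ℕ),
        ∀ n : ℕ, sigmaP p ζ s i n * sigmaP p ζ t j n =
          ∑ u ∈ T, (c u : K) * sigmaPIdx p M ζ u n) ∧
    ∀ x y : ℕ → K,
      x ∈ Submodule.span ℤ (Set.range (sigmaPIdx p M ζ)) →
      y ∈ Submodule.span ℤ (Set.range (sigmaPIdx p M ζ)) →
      x * y ∈ Submodule.span ℤ (Set.range (sigmaPIdx p M ζ)) := by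
  have hζM : ζ ^ M = 1 := hζ.pow_eq_one
  refine ⟨fun k l s i t j _ _ => ?_, fun x y hx hy => ?_⟩
  · obtain ⟨c, hc⟩ := AddSubmonoid.mem_closure_range_iff.1
      (sigmaP_mul_sigmaP_mem_sigmaPCone (p := p) hM hζM s i t j)
    refine ⟨c.support, c, fun n => ?_⟩
    rw [← Pi.mul_apply, hc]
    simp only [Finsupp.sum, Finset.sum_apply, nsmul_eq_mul, Pi.mul_apply, Pi.natCast_apply]
  · refine Submodule.mul_mem_span_of_mul_mem ?_ hx hy
    rintro _ ⟨u, rfl⟩ _ ⟨v, rfl⟩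
    exact Submodule.closure_subset_span (sigmaP_mul_sigmaP_mem_sigmaPCone hM hζM _ _ _ _)

/-- the pointwise product of two functions `σ_p(s;i)` and `σ_p(t;j)` is a finite
linear combination with non-negative integer coefficients of functions `σ_p(u;v)`;
consequently the `ℤ`-span of the `σ_p(u;v)` in the algebra of functions `ℕ → K` is closed
under pointwise multiplication. -/
theorem sigmaP_mul_shuffle (p M : ℕ) [Fact p.Prime] (hM : 1 ≤ M) (hpM : ¬ p ∣ M)
    [NormedField K] [CompleteSpace K] [Algebra ℚ_[p] K]
    (hiso : ∀ x : ℚ_[p], ‖algebraMap ℚ_[p] K x‖ = ‖x‖)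
    (ζ : K) (hζ : IsPrimitiveRoot ζ M) (hgen : Algebra.adjoin ℚ_[p] {ζ} = ⊤) :
    (∀ (k l : ℕ) (s i : Fin k → ℕ) (t j : Fin l → ℕ),
      (∀ b, i b < M) → (∀ b, j b < M) →
      ∃ (T : Finset (SIdx M)) (c : SIdx M → ℕ),
        ∀ n : ℕ, sigmaP p ζ s i n * sigmaP p ζ t j n =
          ∑ u ∈ T, (c u : K) * sigmaPIdx p M ζ u n) ∧
    ∀ x y : ℕ → K,
      x ∈ Submodule.span ℤ (Set.range (sigmaPIdx p M ζ)) →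
      y ∈ Submodule.span ℤ (Set.range (sigmaPIdx p M ζ)) →
      x * y ∈ Submodule.span ℤ (Set.range (sigmaPIdx p M ζ)) :=
  sigmaP_mul_shuffle_general p M hM ζ hζ

end
end
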